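/- arXiv:2410.10458 — 2 statements merged into one kernel-verified Lean document; each statement's English description precedes it below -/
import Mathlib

section
/- Let s ∈ (0,1) and suppose ω(α,h) ≤ C h^N |x_α|^{−N−2s} for all α ≠ 0. Then the Fourier symbol m(ξ) = −h^N Σ_{β∈ℤ^N} a(x_β)(1 − cos(ξ·x_β)) (with a(x_α) = h^{−N} ω(α,h)) satisfies −K₁|ξ|^{2s} ≤ m(ξ) for all ξ ∈ Q_h = [−π/h, π/h]^N, for some constant K₁ > 0 depending only on C, N, s. -/
/-!
With `M = ‖β‖_∞`, each term of the series satisfies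
`ω β (1 - cos (ξ · x_β)) ≤ 2 C h^{-2s} M^{-N-2s} min((√N h |ξ| M)², 1)`,
because `|x_β| ≥ h M`, `|ξ · x_β| ≤ √N h |ξ| M` (Cauchy–Schwarz) and `1 - cos z ≤ 2 min(z², 1)`.
At most `2N 3^{N-1} M^{N-1}` lattice points have sup-norm `M`, so the lattice sum is controlled by
the one-dimensional sum `Σ_M M^{-1-2s} min((t M)², 1)` with `t = √N h |ξ|`. Splitting it at
`M ≈ 1/t`, the small `M` contribute at most `t² Σ_{M ≤ 1/t} M^{1-2s} ≲ t^{2s}` and the large `M`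
at most `Σ_{M > 1/t} M^{-1-2s} ≲ t^{2s}` (both by comparison with integrals); the powers of `h`
cancel.
-/

open Real Finset

lemma one_sub_cos_le_two_mul_min_sq (z : ℝ) : 1 - cos z ≤ 2 * min (z ^ 2) 1 := by
  rw [mul_min_of_nonneg _ _ zero_le_two]
  exact le_min (by nlinarith [one_sub_sq_div_two_le_cos (x := z), sq_nonneg z])
    (by linarith [neg_one_le_cos z])

lemma sum_range_add_one_rpow_neg_le {q : ℝ} (hq0 : 0 ≤ q) (hq1 : q < 1) (M : ℕ) :
    ∑ i ∈ range M, ((i : ℝ) + 1) ^ (-q) ≤ (M : ℝ) ^ (1 - q) / (1 - q) := by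
  rcases M.eq_zero_or_pos with rfl | hM
  · simp [zero_rpow (by linarith : 1 - q ≠ 0)]
  have hanti : AntitoneOn (fun x : ℝ => x ^ (-q)) (Set.Icc (1 : ℕ) M) := fun x hx y _ hxy =>
    rpow_le_rpow_of_nonpos (by simp only [Nat.cast_one, Set.mem_Icc] at hx; linarith [hx.1]) hxy
      (by linarith)
  have hint := hanti.sum_le_integral_Ico hM
  rw [integral_rpow (Or.inl (by linarith))] at hint
  rw [range_eq_Ico, sum_eq_sum_Ico_succ_bot hM]
  have h1q : 0 < 1 - q := by linarith
  push_cast at hint ⊢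
  rw [show -q + 1 = 1 - q by ring, one_rpow] at hint
  calc _ ≤ 1 + ((M : ℝ) ^ (1 - q) - 1) / (1 - q) := by simpa using hint
    _ ≤ _ := by
      have : 1 ≤ 1 / (1 - q) := by rw [le_div_iff₀ h1q]; linarith
      rw [sub_div]; linarith

lemma tsum_nat_add_rpow_neg_le {p : ℝ} (hp : 1 < p) (M : ℕ) :
    ∑' n : ℕ, ((n + (M + 1) : ℕ) : ℝ) ^ (-p) ≤ p / (p - 1) * ((M : ℝ) + 1) ^ (1 - p) := by
  have hM : (0 : ℝ) < (M : ℝ) + 1 := by positivity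
  have hsum : Summable fun n : ℕ => ((n + (M + 1) : ℕ) : ℝ) ^ (-p) := by
    simpa [add_assoc] using (summable_nat_add_iff (M + 1)).2 (summable_nat_rpow.2 (by linarith))
  have hanti : AntitoneOn (fun x : ℝ => x ^ (-p)) (Set.Ici ((M + 1 : ℕ) : ℝ)) := fun x hx y _ hxy =>
    rpow_le_rpow_of_nonpos
      (by simp only [Nat.cast_add, Nat.cast_one, Set.mem_Ici] at hx; linarith) hxy (by linarith)
  have hint := hanti.tsum_comp_add_le_integral (M + 1)
    (by simpa using integrableOn_Ioi_rpow_of_lt (by linarith : -p < -1) hM)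
    (fun x hx => rpow_nonneg
      (by simp only [Nat.cast_add, Nat.cast_one, Set.mem_Ioi] at hx; linarith) _)
  rw [Nat.cast_add_one, integral_Ioi_rpow_of_lt (by linarith) hM] at hint
  rw [hsum.tsum_eq_zero_add]
  have hfirst : ((M : ℝ) + 1) ^ (-p) ≤ ((M : ℝ) + 1) ^ (1 - p) :=
    rpow_le_rpow_of_exponent_le (by linarith) (by linarith)
  push_cast at hint ⊢
  have hp1 : 0 < p - 1 := by linarith
  rw [show -p + 1 = 1 - p by ring, neg_div, ← div_neg, neg_sub] at hint
  have htail : ∑' n : ℕ, ((n : ℝ) + 1 + (M + 1)) ^ (-p) ≤ ((M : ℝ) + 1) ^ (1 - p) / (p - 1) := by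
    simpa only [add_right_comm _ _ (1 : ℝ)] using hint
  calc _ ≤ ((M : ℝ) + 1) ^ (1 - p) + ((M : ℝ) + 1) ^ (1 - p) / (p - 1) := by
        rw [zero_add]; exact add_le_add hfirst htail
    _ = _ := by field_simp; ring

lemma summable_rpow_mul_min_sq {s : ℝ} (hs : 0 < s) (t : ℝ) :
    Summable fun m : ℕ => (m : ℝ) ^ (-(1 + 2 * s)) * min ((t * m) ^ 2) 1 :=
  (summable_nat_rpow.2 (by linarith)).of_nonneg_of_le (fun m => by positivity)
    fun m => mul_le_of_le_one_right (by positivity) (min_le_right _ _)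

lemma sum_range_rpow_mul_min_sq_le {s t : ℝ} (hs0 : 0 < s) (hs1 : s < 1) (ht : 0 < t) {M : ℕ}
    (htM : t * M ≤ 1) :
    ∑ i ∈ range M, ((i + 1 : ℕ) : ℝ) ^ (-(1 + 2 * s)) * min ((t * (i + 1 : ℕ)) ^ 2) 1 ≤
      t ^ (2 * s) / (1 - s) := by
  have h1s : 0 < 1 - s := by linarith
  have hterm : ∀ i ∈ range M, ((i + 1 : ℕ) : ℝ) ^ (-(1 + 2 * s)) * min ((t * (i + 1 : ℕ)) ^ 2) 1
      ≤ t ^ 2 * (M : ℝ) ^ (1 - s) * ((i : ℝ) + 1) ^ (-s) := by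
    intro i hi
    have hx : (0 : ℝ) < (i : ℝ) + 1 := by positivity
    have hxM : (i : ℝ) + 1 ≤ M := by exact_mod_cast mem_range.1 hi
    push_cast
    calc ((i : ℝ) + 1) ^ (-(1 + 2 * s)) * min ((t * ((i : ℝ) + 1)) ^ 2) 1
        ≤ ((i : ℝ) + 1) ^ (-(1 + 2 * s)) * (t * ((i : ℝ) + 1)) ^ 2 := by
          gcongr; exact min_le_left _ _
      _ = t ^ 2 * ((i : ℝ) + 1) ^ (1 - s) * ((i : ℝ) + 1) ^ (-s) := by
          rw [mul_pow, ← rpow_natCast ((i : ℝ) + 1) 2, mul_assoc, ← rpow_add hx, mul_left_comm,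
            ← rpow_add hx]
          congr 2; push_cast; ring
      _ ≤ _ := by gcongr
  have ht2 : t ^ 2 = t ^ (2 * s) * t ^ (1 - s) * t ^ (1 - s) := by
    rw [← rpow_add ht, ← rpow_add ht, ← rpow_natCast]; ring_nf
  calc _ ≤ ∑ i ∈ range M, t ^ 2 * (M : ℝ) ^ (1 - s) * ((i : ℝ) + 1) ^ (-s) := sum_le_sum hterm
    _ ≤ t ^ 2 * (M : ℝ) ^ (1 - s) * ((M : ℝ) ^ (1 - s) / (1 - s)) := by
      rw [← mul_sum]; gcongr; exact sum_range_add_one_rpow_neg_le hs0.le hs1 M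
    _ = t ^ (2 * s) * ((t * M) ^ (1 - s)) ^ 2 / (1 - s) := by
      rw [mul_rpow ht.le M.cast_nonneg, ht2]; ring
    _ ≤ t ^ (2 * s) * 1 / (1 - s) := by
      gcongr
      exact pow_le_one₀ (by positivity) (rpow_le_one (by positivity) htM h1s.le)
    _ = _ := by rw [mul_one]

lemma tsum_nat_add_rpow_mul_min_sq_le {s t : ℝ} (hs : 0 < s) (ht : 0 < t) {M : ℕ}
    (hM : t⁻¹ ≤ M + 1) :
    ∑' n : ℕ, ((n + (M + 1) : ℕ) : ℝ) ^ (-(1 + 2 * s)) * min ((t * (n + (M + 1) : ℕ)) ^ 2) 1 ≤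
      (1 + 2 * s) / (2 * s) * t ^ (2 * s) :=
  calc _ ≤ ∑' n : ℕ, ((n + (M + 1) : ℕ) : ℝ) ^ (-(1 + 2 * s)) :=
        Summable.tsum_le_tsum
          (fun n => mul_le_of_le_one_right (by positivity) (min_le_right _ _))
          ((summable_nat_add_iff (f := fun m : ℕ => (m : ℝ) ^ (-(1 + 2 * s)) * min ((t * m) ^ 2) 1)
            (M + 1)).2 (summable_rpow_mul_min_sq hs t))
          ((summable_nat_add_iff (f := fun m : ℕ => (m : ℝ) ^ (-(1 + 2 * s))) (M + 1)).2
            (summable_nat_rpow.2 (by linarith)))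
    _ ≤ (1 + 2 * s) / (1 + 2 * s - 1) * ((M : ℝ) + 1) ^ (1 - (1 + 2 * s)) :=
        tsum_nat_add_rpow_neg_le (by linarith) M
    _ ≤ (1 + 2 * s) / (2 * s) * t⁻¹ ^ (-(2 * s)) := by
        rw [show 1 + 2 * s - 1 = 2 * s by ring, show 1 - (1 + 2 * s) = -(2 * s) by ring]
        exact mul_le_mul_of_nonneg_left
          (rpow_le_rpow_of_nonpos (by positivity) hM (by linarith)) (by positivity)
    _ = _ := by rw [inv_rpow ht.le, rpow_neg ht.le, inv_inv]

lemma tsum_rpow_mul_min_sq_le {s t : ℝ} (hs0 : 0 < s) (hs1 : s < 1) (ht : 0 ≤ t) :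
    ∑' m : ℕ, (m : ℝ) ^ (-(1 + 2 * s)) * min ((t * m) ^ 2) 1 ≤
      (1 / (1 - s) + (1 + 2 * s) / (2 * s)) * t ^ (2 * s) := by
  rcases ht.eq_or_lt with rfl | ht
  · simp [zero_rpow (by positivity : 2 * s ≠ 0)]
  obtain ⟨M, htM, hM⟩ : ∃ M : ℕ, t * M ≤ 1 ∧ t⁻¹ ≤ M + 1 := by
    refine ⟨⌊t⁻¹⌋₊, ?_, (Nat.lt_floor_add_one _).le⟩
    rw [← le_div_iff₀' ht, one_div]
    exact Nat.floor_le (by positivity)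
  rw [← (summable_rpow_mul_min_sq hs0 t).sum_add_tsum_nat_add (M + 1), sum_range_succ',
    CharP.cast_eq_zero, mul_zero, zero_pow two_ne_zero, min_eq_left zero_le_one, mul_zero,
    add_zero, add_mul, one_div_mul_eq_div]
  exact add_le_add (sum_range_rpow_mul_min_sq_le hs0 hs1 ht htM)
    (tsum_nat_add_rpow_mul_min_sq_le hs0 ht hM)

section Lattice

variable {ι : Type*} [Fintype ι]

def supNorm (β : ι → ℤ) : ℕ := univ.sup fun i => (β i).natAbs

lemma supNorm_le_iff {β : ι → ℤ} {n : ℕ} : supNorm β ≤ n ↔ ∀ i, (β i).natAbs ≤ n := by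
  simp [supNorm]

@[simp] lemma supNorm_zero : supNorm (0 : ι → ℤ) = 0 := by simp [supNorm]

lemma supNorm_pos {β : ι → ℤ} (hβ : β ≠ 0) : 0 < supNorm β := by
  obtain ⟨i, hi⟩ := Function.ne_iff.1 hβ
  exact (Int.natAbs_pos.2 hi).trans_le (supNorm_le_iff.1 le_rfl i)

lemma sum_sq_le_card_mul_supNorm_sq (β : ι → ℤ) :
    ∑ i, (β i : ℝ) ^ 2 ≤ Fintype.card ι * (supNorm β : ℝ) ^ 2 := by
  rw [← nsmul_eq_mul, ← card_univ, ← sum_const]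
  refine sum_le_sum fun i _ => ?_
  rw [← sq_abs, ← Int.cast_abs, Int.abs_eq_natAbs]
  gcongr
  exact_mod_cast supNorm_le_iff.1 le_rfl i

lemma supNorm_sq_le_sum_sq (β : ι → ℤ) : (supNorm β : ℝ) ^ 2 ≤ ∑ i, (β i : ℝ) ^ 2 := by
  rcases isEmpty_or_nonempty ι with _ | _
  · simp [supNorm]
  obtain ⟨i, -, hi⟩ := exists_mem_eq_sup univ univ_nonempty fun i => (β i).natAbs
  rw [supNorm, hi, Nat.cast_natAbs, Int.cast_abs, sq_abs]
  exact single_le_sum (fun j _ => sq_nonneg (β j : ℝ)) (mem_univ i)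

lemma sq_sum_mul_le_card_mul_supNorm_sq (x : ι → ℝ) (β : ι → ℤ) :
    (∑ i, x i * β i) ^ 2 ≤ (√(Fintype.card ι) * √(∑ i, x i ^ 2) * supNorm β) ^ 2 := by
  rw [mul_pow, mul_pow, sq_sqrt (by positivity), sq_sqrt (by positivity)]
  calc _ ≤ (∑ i, x i ^ 2) * ∑ i, (β i : ℝ) ^ 2 := sum_mul_sq_le_sq_mul_sq _ _ _
    _ ≤ (∑ i, x i ^ 2) * (Fintype.card ι * supNorm β ^ 2) := by
      gcongr; exact sum_sq_le_card_mul_supNorm_sq β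
    _ = _ := by ring

lemma weight_mul_one_sub_cos_le {s C h : ℝ} (hs : 0 < s) (hC : 0 ≤ C) (hh : 0 < h)
    {ω : (ι → ℤ) → ℝ} (hω : ∀ α, α ≠ 0 → ω α ≤
      C * h ^ Fintype.card ι * √(∑ i, (h * α i) ^ 2) ^ (-(Fintype.card ι : ℝ) - 2 * s))
    (ξ : ι → ℝ) (β : ι → ℤ) :
    ω β * (1 - cos (∑ i, ξ i * (h * β i))) ≤
      2 * C * h ^ (-(2 * s)) * ((supNorm β : ℝ) ^ (-(Fintype.card ι : ℝ) - 2 * s) *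
        min ((√(Fintype.card ι) * h * √(∑ i, ξ i ^ 2) * supNorm β) ^ 2) 1) := by
  rcases eq_or_ne β 0 with rfl | hβ
  · simp
  have hM : (0 : ℝ) < supNorm β := by exact_mod_cast supNorm_pos hβ
  have hρ : h * supNorm β ≤ √(∑ i, (h * β i) ^ 2) := by
    rw [le_sqrt (by positivity) (by positivity)]
    simp only [mul_pow, ← mul_sum]
    gcongr
    exact supNorm_sq_le_sum_sq β
  have hωβ : ω β ≤ C * h ^ (-(2 * s)) * (supNorm β : ℝ) ^ (-(Fintype.card ι : ℝ) - 2 * s) :=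
    calc ω β ≤ C * h ^ Fintype.card ι * √(∑ i, (h * β i) ^ 2) ^ (-(Fintype.card ι : ℝ) - 2 * s) :=
          hω β hβ
      _ ≤ C * h ^ Fintype.card ι * (h * supNorm β) ^ (-(Fintype.card ι : ℝ) - 2 * s) :=
          mul_le_mul_of_nonneg_left
            (rpow_le_rpow_of_nonpos (by positivity) hρ (by linarith)) (by positivity)
      _ = _ := by
          rw [mul_rpow hh.le hM.le, ← rpow_natCast, mul_assoc C, ← mul_assoc (h ^ _),
            ← rpow_add hh]
          ring_nf
  have hz : (∑ i, ξ i * (h * β i)) ^ 2 ≤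
      (√(Fintype.card ι) * h * √(∑ i, ξ i ^ 2) * supNorm β) ^ 2 := by
    rw [show ∑ i, ξ i * (h * β i) = h * ∑ i, ξ i * β i by
      rw [mul_sum]; exact sum_congr rfl fun i _ => by ring]
    calc _ = h ^ 2 * (∑ i, ξ i * β i) ^ 2 := mul_pow _ _ _
      _ ≤ h ^ 2 * (√(Fintype.card ι) * √(∑ i, ξ i ^ 2) * supNorm β) ^ 2 :=
          mul_le_mul_of_nonneg_left (sq_sum_mul_le_card_mul_supNorm_sq ξ β) (by positivity)
      _ = _ := by ring
  set z := ∑ i, ξ i * (h * β i)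
  calc ω β * (1 - cos z)
      ≤ C * h ^ (-(2 * s)) * (supNorm β : ℝ) ^ (-(Fintype.card ι : ℝ) - 2 * s) * (1 - cos z) :=
        mul_le_mul_of_nonneg_right hωβ (by linarith [cos_le_one z])
    _ ≤ C * h ^ (-(2 * s)) * (supNorm β : ℝ) ^ (-(Fintype.card ι : ℝ) - 2 * s) *
          (2 * min ((√(Fintype.card ι) * h * √(∑ i, ξ i ^ 2) * supNorm β) ^ 2) 1) := by
        gcongr
        exact (one_sub_cos_le_two_mul_min_sq z).trans (by gcongr)
    _ = _ := by ring

variable (ι) [DecidableEq ι]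

noncomputable def latticeBox (n : ℕ) : Finset (ι → ℤ) := Fintype.piFinset fun _ => Icc (-(n : ℤ)) n

variable {ι}

lemma mem_latticeBox {β : ι → ℤ} {n : ℕ} : β ∈ latticeBox ι n ↔ supNorm β ≤ n := by
  simp only [latticeBox, Fintype.mem_piFinset, mem_Icc, supNorm_le_iff]
  exact forall_congr' fun i => by omega

lemma card_latticeBox_succ_sdiff_le (k : ℕ) :
    #(latticeBox ι (k + 1) \ latticeBox ι k) ≤
      2 * Fintype.card ι * 3 ^ (Fintype.card ι - 1) * (k + 1) ^ (Fintype.card ι - 1) := by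
  have hsub : latticeBox ι k ⊆ latticeBox ι (k + 1) := fun β hβ =>
    mem_latticeBox.2 ((mem_latticeBox.1 hβ).trans k.le_succ)
  rw [card_sdiff_of_subset hsub]
  simp only [latticeBox, Fintype.card_piFinset, Int.card_Icc, prod_const, card_univ]
  have h1 : ((k + 1 : ℕ) + 1 - -((k + 1 : ℕ) : ℤ)).toNat = 2 * k + 3 := by omega
  have h2 : ((k : ℤ) + 1 - -(k : ℤ)).toNat = 2 * k + 1 := by omega
  rw [h1, h2]
  set d := Fintype.card ι
  have hdiff := abs_pow_sub_pow_le (α := ℤ) (2 * k + 3) (2 * k + 1) d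
  rw [show (2 * k + 3 : ℤ) - (2 * k + 1) = 2 by ring, abs_two,
    max_eq_left (abs_le_abs_of_nonneg (by positivity) (by omega)),
    abs_of_nonneg (by positivity : (0 : ℤ) ≤ 2 * k + 3)] at hdiff
  have hle : (2 * k + 1) ^ d ≤ (2 * k + 3) ^ d := by gcongr; omega
  zify [hle]
  calc _ ≤ 2 * (d : ℤ) * (2 * k + 3) ^ (d - 1) := (le_abs_self _).trans hdiff
    _ ≤ 2 * d * (3 * (k + 1)) ^ (d - 1) := by gcongr; omega
    _ = _ := by rw [mul_pow]; ring

lemma sum_supNorm_le_tsum {g : ℕ → ℝ} (hg : ∀ m, 0 ≤ g m) (hg0 : g 0 = 0)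
    (hsum : Summable fun m : ℕ => (m : ℝ) ^ (Fintype.card ι - 1) * g m) (A : Finset (ι → ℤ)) :
    ∑ β ∈ A, g (supNorm β) ≤ 2 * Fintype.card ι * 3 ^ (Fintype.card ι - 1) *
      ∑' m : ℕ, (m : ℝ) ^ (Fintype.card ι - 1) * g m := by
  set d := Fintype.card ι
  have hmono : Monotone (latticeBox ι) := fun a b hab β hβ =>
    mem_latticeBox.2 ((mem_latticeBox.1 hβ).trans hab)
  have hcore : ∑ β ∈ latticeBox ι 0, g (supNorm β) = 0 :=
    sum_eq_zero fun β hβ => by rw [Nat.eq_zero_of_le_zero (mem_latticeBox.1 hβ), hg0]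
  have hshell (k : ℕ) : ∑ β ∈ latticeBox ι (k + 1) \ latticeBox ι k, g (supNorm β) =
      #(latticeBox ι (k + 1) \ latticeBox ι k) * g (k + 1) := by
    rw [← nsmul_eq_mul, ← sum_const]
    refine sum_congr rfl fun β hβ => ?_
    rw [mem_sdiff, mem_latticeBox, mem_latticeBox] at hβ
    rw [show supNorm β = k + 1 by omega]
  have htail : ∑ k ∈ range (A.sup supNorm), ((k + 1 : ℕ) : ℝ) ^ (d - 1) * g (k + 1) ≤
      ∑' m : ℕ, (m : ℝ) ^ (d - 1) * g m := by
    rw [hsum.tsum_eq_zero_add, hg0, mul_zero, zero_add]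
    exact ((summable_nat_add_iff 1).2 hsum).sum_le_tsum _
      fun k _ => mul_nonneg (by positivity) (hg _)
  calc ∑ β ∈ A, g (supNorm β) ≤ ∑ β ∈ latticeBox ι (A.sup supNorm), g (supNorm β) :=
        sum_le_sum_of_subset_of_nonneg (fun β hβ => mem_latticeBox.2 (le_sup hβ))
          fun _ _ _ => hg _
    _ = ∑ k ∈ range (A.sup supNorm), #(latticeBox ι (k + 1) \ latticeBox ι k) * g (k + 1) := by
        rw [sum_eq_sum_range_sdiff _ hmono, hcore, zero_add]
        exact sum_congr rfl fun k _ => hshell k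
    _ ≤ ∑ k ∈ range (A.sup supNorm),
          2 * d * 3 ^ (d - 1) * (((k + 1 : ℕ) : ℝ) ^ (d - 1) * g (k + 1)) := by
        refine sum_le_sum fun k _ => ?_
        rw [← mul_assoc]
        exact mul_le_mul_of_nonneg_right (by exact_mod_cast card_latticeBox_succ_sdiff_le k) (hg _)
    _ ≤ _ := by rw [← mul_sum]; gcongr

lemma sum_supNorm_rpow_mul_min_sq_le [Nonempty ι] {s t : ℝ} (hs0 : 0 < s) (hs1 : s < 1)
    (ht : 0 ≤ t) (A : Finset (ι → ℤ)) :
    ∑ β ∈ A, (supNorm β : ℝ) ^ (-(Fintype.card ι : ℝ) - 2 * s) * min ((t * supNorm β) ^ 2) 1 ≤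
      2 * Fintype.card ι * 3 ^ (Fintype.card ι - 1) *
        ((1 / (1 - s) + (1 + 2 * s) / (2 * s)) * t ^ (2 * s)) := by
  have hweight (m : ℕ) : (m : ℝ) ^ (Fintype.card ι - 1) *
      ((m : ℝ) ^ (-(Fintype.card ι : ℝ) - 2 * s) * min ((t * m) ^ 2) 1) =
        (m : ℝ) ^ (-(1 + 2 * s)) * min ((t * m) ^ 2) 1 := by
    rcases m.eq_zero_or_pos with rfl | hm
    · simp
    rw [← mul_assoc, ← rpow_natCast, ← rpow_add (by positivity), Nat.cast_sub Fintype.card_pos]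
    congr 2; push_cast; ring
  have hsum := sum_supNorm_le_tsum
    (g := fun m : ℕ => (m : ℝ) ^ (-(Fintype.card ι : ℝ) - 2 * s) * min ((t * m) ^ 2) 1)
    (fun m => by positivity) (by simp)
    (by simpa only [hweight] using summable_rpow_mul_min_sq hs0 t) A
  simp only [hweight] at hsum
  exact hsum.trans (by gcongr; exact tsum_rpow_mul_min_sq_le hs0 hs1 ht)

end Lattice

/-- If `ω(α,h) ≤ C hᴺ |x_α|^{-N-2s}` with `s ∈ (0,1)`, then the Fourier symbol
`m(ξ) = -Σ_{β≠0} ω(β,h)(1 - cos(ξ·x_β))` of `L_h` satisfies `-K₁|ξ|^{2s} ≤ m(ξ)` on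
`Q_h = [-π/h, π/h]ᴺ`, for a constant `K₁ > 0` depending only on `C`, `N`, `s`. -/
theorem stmt8 (N : ℕ) (hN : 0 < N) (s C : ℝ) (hs : s ∈ Set.Ioo (0 : ℝ) 1) (hC : 0 < C) :
    ∃ K1 > (0 : ℝ), ∀ h : ℝ, 0 < h → ∀ ω : (Fin N → ℤ) → ℝ,
      (∀ α, ω (-α) = ω α) → (∀ α, 0 ≤ ω α) → ω 0 = 0 →
      Summable ω → 0 < ∑' α, ω α →
      (∀ α : Fin N → ℤ, α ≠ 0 →
        ω α ≤ C * h ^ N * (Real.sqrt (∑ i, (h * α i) ^ 2)) ^ (-(N : ℝ) - 2 * s)) →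
      ∀ ξ : Fin N → ℝ, (∀ i, |ξ i| ≤ π / h) →
        -K1 * (Real.sqrt (∑ i, ξ i ^ 2)) ^ (2 * s) ≤
          -∑' β : Fin N → ℤ, ω β * (1 - Real.cos (∑ i, ξ i * (h * β i))) := by
  obtain ⟨hs0, hs1⟩ := hs
  have : Nonempty (Fin N) := ⟨⟨0, hN⟩⟩
  have hN' : (0 : ℝ) < N := by exact_mod_cast hN
  have h1s : 0 < 1 - s := by linarith
  refine ⟨2 * C * (2 * N * 3 ^ (N - 1) * (1 / (1 - s) + (1 + 2 * s) / (2 * s))) * √N ^ (2 * s),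
    by positivity, ?_⟩
  intro h hh ω _ _ _ _ _ hω ξ _
  have hterm := weight_mul_one_sub_cos_le hs0 hC.le hh (by simpa using hω) ξ
  have hsum := sum_supNorm_rpow_mul_min_sq_le (ι := Fin N) hs0 hs1
    (t := √N * h * √(∑ i, ξ i ^ 2)) (by positivity)
  simp only [Fintype.card_fin] at hterm hsum
  rw [neg_mul, neg_le_neg_iff]
  refine tsum_le_of_sum_le' (by positivity) fun A => ?_
  calc _ ≤ _ := sum_le_sum fun β _ => hterm β
    _ = _ := (mul_sum _ _ _).symm
    _ ≤ _ := mul_le_mul_of_nonneg_left (hsum A) (by positivity)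
    _ = _ := by
      rw [mul_rpow (by positivity) (by positivity), mul_rpow (by positivity) hh.le, rpow_neg hh.le]
      field_simp
end

section
/- Assume (A1), (CFL) and p > 1. If u is a nonnegative solution of the discrete scheme that is global in time (i.e. Σ_{j=0}^∞ τ_j = +∞), then u is bounded: sup_j ‖u(·,t_j)‖_{ℓ^∞(hℤ^N)} < ∞. -/
open Real Filter

/-- The discrete diffusion operator `L_h φ(x_α) = Σ_{β≠0} (φ(x_α + x_β) - φ(x_α)) ω(β)`. -/
noncomputable def discreteLh {N : ℕ} (ω : (Fin N → ℤ) → ℝ) (φ : (Fin N → ℤ) → ℝ)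
    (α : Fin N → ℤ) : ℝ :=
  ∑' β : Fin N → ℤ, (φ (α + β) - φ α) * ω β

/-!
Writing `U_j = ‖u(·,t_j)‖_∞` and `S = Σ ω`, the bound `L_h u ≥ -S u` for `u ≥ 0` gives
`U_{j+1} ≥ U_j (1 - τ_j S) + τ_j U_j^p`. Once `U_j^{p-1} ≥ 2S` (and `U_j ≥ 1`), the adaptive
step is `τ_j = τ U_j^{1-p}`, so `U_{j+1} ≥ (1 + τ/2) U_j`: the sup norm grows geometrically from
then on, the steps `τ_j` decay geometrically, and `Σ τ_j < ∞`.
-/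

noncomputable def adaptiveStep (τ p x : ℝ) : ℝ := τ * min 1 (x ^ (1 - p))

section adaptiveStep

variable {τ p x : ℝ}

lemma adaptiveStep_nonneg (hτ : 0 ≤ τ) (hx : 0 ≤ x) : 0 ≤ adaptiveStep τ p x :=
  mul_nonneg hτ (le_min zero_le_one (rpow_nonneg hx _))

lemma adaptiveStep_le (hτ : 0 ≤ τ) : adaptiveStep τ p x ≤ τ :=
  mul_le_of_le_one_right hτ (min_le_left _ _)

lemma adaptiveStep_of_one_le (hp : 1 ≤ p) (hx : 1 ≤ x) :
    adaptiveStep τ p x = τ * x ^ (1 - p) := by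
  rw [adaptiveStep, min_eq_right (rpow_le_one_of_one_le_of_nonpos hx (by linarith))]

lemma adaptiveStep_le_rpow_mul_of_mul_le {c y : ℝ} (hτ : 0 ≤ τ) (hp : 1 ≤ p) (hc : 0 < c)
    (hx : 1 ≤ x) (hy : c * x ≤ y) :
    adaptiveStep τ p y ≤ c ^ (1 - p) * adaptiveStep τ p x := by
  rw [adaptiveStep_of_one_le hp hx]
  calc adaptiveStep τ p y ≤ τ * y ^ (1 - p) := mul_le_mul_of_nonneg_left (min_le_right _ _) hτ
    _ ≤ τ * (c * x) ^ (1 - p) :=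
        mul_le_mul_of_nonneg_left (rpow_le_rpow_of_nonpos (by positivity) hy (by linarith)) hτ
    _ = c ^ (1 - p) * (τ * x ^ (1 - p)) := by rw [mul_rpow hc.le (by linarith)]; ring

/-- Once `x^{p-1} ≥ 2S`, the reaction gain `τ x` is at least twice the diffusion loss
`τ x^{2-p} S`. -/
lemma one_add_half_mul_le_of_step_bound {S y : ℝ} (hτ : 0 ≤ τ) (hp : 1 ≤ p) (hx : 1 ≤ x)
    (hS : 2 * S ≤ x ^ (p - 1))
    (hy : x * (1 - adaptiveStep τ p x * S) + adaptiveStep τ p x * x ^ p ≤ y) :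
    (1 + τ / 2) * x ≤ y := by
  have hx0 : 0 < x := by linarith
  rw [adaptiveStep_of_one_le hp hx] at hy
  have hpow : x ^ (1 - p) * x ^ p = x := by rw [← rpow_add hx0]; norm_num
  have hhalf : x ^ (1 - p) * S ≤ 1 / 2 := by
    have hinv : x ^ (1 - p) * x ^ (p - 1) = 1 := by rw [← rpow_add hx0]; norm_num
    nlinarith [rpow_pos_of_pos hx0 (1 - p)]
  nlinarith [mul_le_mul_of_nonneg_left hhalf (by positivity : 0 ≤ τ * x)]

end adaptiveStep

lemma neg_mul_tsum_le_discreteLh {N : ℕ} {ω φ : (Fin N → ℤ) → ℝ} (hω : ∀ β, 0 ≤ ω β)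
    (hsum : Summable ω) (hφ : ∀ α, 0 ≤ φ α) (α : Fin N → ℤ) :
    -(φ α * ∑' β, ω β) ≤ discreteLh ω φ α := by
  by_cases hL : Summable fun β => (φ (α + β) - φ α) * ω β
  · rw [discreteLh, ← neg_mul, ← tsum_mul_left]
    refine (hsum.mul_left _).tsum_le_tsum (fun β => ?_) hL
    exact mul_le_mul_of_nonneg_right (by linarith [hφ (α + β)]) (hω β)
  · -- a divergent series has `tsum` equal to `0`
    rw [discreteLh, tsum_eq_zero_of_not_summable hL, neg_nonpos]
    exact mul_nonneg (hφ α) (tsum_nonneg hω)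

lemma ciSup_step_lower_bound {ι : Type*} [Nonempty ι] {u v : ι → ℝ} {a S p : ℝ} (ha : 0 ≤ a)
    (haS : a * S ≤ 1) (hp : 0 ≤ p) (hu : ∀ i, 0 ≤ u i) (hub : BddAbove (Set.range u))
    (hvb : BddAbove (Set.range v)) (h : ∀ i, u i * (1 - a * S) + a * u i ^ p ≤ v i) :
    (⨆ i, u i) * (1 - a * S) + a * (⨆ i, u i) ^ p ≤ ⨆ i, v i := by
  -- the truncation `max x 0` makes the bound monotone on all of `ℝ`
  set g : ℝ → ℝ := fun x => x * (1 - a * S) + a * max x 0 ^ p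
  have hmono : Monotone g := fun x y hxy =>
    add_le_add (mul_le_mul_of_nonneg_right hxy (by linarith))
      (mul_le_mul_of_nonneg_left (rpow_le_rpow (le_max_right _ _) (max_le_max hxy le_rfl) hp) ha)
  have hcont : Continuous g :=
    (continuous_id.mul continuous_const).add
      (continuous_const.mul ((continuous_id.max continuous_const).rpow_const fun _ => Or.inr hp))
  calc (⨆ i, u i) * (1 - a * S) + a * (⨆ i, u i) ^ p = g (⨆ i, u i) := by
        simp only [g, max_eq_left (Real.iSup_nonneg hu)]
    _ = ⨆ i, g (u i) := hmono.map_ciSup_of_continuousAt hcont.continuousAt hub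
    _ ≤ ⨆ i, v i := ciSup_mono hvb fun i => by simpa only [g, max_eq_left (hu i)] using h i

lemma iSup_step_lower_bound_of_scheme {N : ℕ} {ω u v : (Fin N → ℤ) → ℝ} {a p : ℝ}
    (hω : ∀ β, 0 ≤ ω β) (hsum : Summable ω) (ha : 0 ≤ a) (haS : a * ∑' β, ω β ≤ 1) (hp : 0 ≤ p)
    (hu : ∀ α, 0 ≤ u α) (hub : BddAbove (Set.range u)) (hvb : BddAbove (Set.range v))
    (hv : ∀ α, v α = u α + a * (discreteLh ω u α + u α ^ p)) :
    (⨆ α, u α) * (1 - a * ∑' β, ω β) + a * (⨆ α, u α) ^ p ≤ ⨆ α, v α :=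
  ciSup_step_lower_bound ha haS hp hu hub hvb fun α => by
    rw [hv]
    nlinarith [neg_mul_tsum_le_discreteLh hω hsum hu α]

lemma mul_le_one_div_of_le_one_div_mul {τ S c : ℝ} (hS : 0 ≤ S) (hc : 0 < c) (h : τ ≤ 1 / (c * S)) :
    τ * S ≤ 1 / c := by
  rcases hS.eq_or_lt with rfl | hS
  · simpa using hc.le
  · calc τ * S ≤ 1 / (c * S) * S := mul_le_mul_of_nonneg_right h hS.le
      _ = 1 / c := by field_simp

theorem stmt13_general (N : ℕ) (p τ : ℝ) (hp : 1 < p) (hτ : 0 < τ)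
    (ω : (Fin N → ℤ) → ℝ)
    (hnonneg : ∀ α, 0 ≤ ω α)
    (hsum : Summable ω)
    (hCFL : τ ≤ 1 / (4 * ∑' α, ω α))
    (u : ℕ → (Fin N → ℤ) → ℝ) (hu : ∀ j α, 0 ≤ u j α)
    (hbdd : ∀ j, BddAbove (Set.range (u j)))
    (Un : ℕ → ℝ) (hUn : ∀ j, Un j = ⨆ α, u j α)
    (τs : ℕ → ℝ) (hτs : ∀ j, τs j = τ * min 1 (Un j ^ (1 - p)))
    (hscheme : ∀ j α, u (j + 1) α = u j α + τs j * (discreteLh ω (u j) α + u j α ^ p))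
    (hglobal : ¬ Summable τs) :
    ∃ B : ℝ, ∀ j, Un j ≤ B := by
  obtain rfl : τs = fun j => adaptiveStep τ p (Un j) := funext hτs
  set S := ∑' α, ω α
  have hτs_nonneg j : 0 ≤ adaptiveStep τ p (Un j) :=
    adaptiveStep_nonneg hτ.le (hUn j ▸ Real.iSup_nonneg (hu j))
  have hS : 0 ≤ S := tsum_nonneg hnonneg
  have hτS : τ * S ≤ 1 / 4 := mul_le_one_div_of_le_one_div_mul hS four_pos hCFL
  have hstep j : Un j * (1 - adaptiveStep τ p (Un j) * S) + adaptiveStep τ p (Un j) * Un j ^ p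
      ≤ Un (j + 1) := by
    have hsup := iSup_step_lower_bound_of_scheme hnonneg hsum (hτs_nonneg j) ?_ (by linarith)
      (hu j) (hbdd j) (hbdd (j + 1)) (hscheme j)
    · rwa [← hUn j, ← hUn (j + 1)] at hsup
    · nlinarith [adaptiveStep_le (p := p) (x := Un j) hτ.le]
  obtain ⟨M, hM⟩ := eventually_atTop.mp <| (eventually_ge_atTop 1).and <|
    (tendsto_rpow_atTop (by linarith : 0 < p - 1)).eventually_ge_atTop (2 * S)
  have hgrow j (hj : M ≤ Un j) : (1 + τ / 2) * Un j ≤ Un (j + 1) :=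
    one_add_half_mul_le_of_step_bound hτ.le hp.le (hM _ hj).1 (hM _ hj).2 (hstep j)
  by_contra! hunbdd
  obtain ⟨n, hn⟩ := hunbdd M
  have hlarge : ∀ j ≥ n, M ≤ Un j := Nat.le_induction hn.le fun j _ hj =>
    hj.trans (by nlinarith [hgrow j hj, (hM _ le_rfl).1])
  refine hglobal <| summable_of_ratio_norm_eventually_le (r := (1 + τ / 2) ^ (1 - p))
    (rpow_lt_one_of_one_lt_of_neg (by linarith) (by linarith)) ?_
  filter_upwards [eventually_ge_atTop n] with j hj
  rw [norm_of_nonneg (hτs_nonneg _), norm_of_nonneg (hτs_nonneg _)]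
  exact adaptiveStep_le_rpow_mul_of_mul_le hτ.le hp.le (by linarith)
    (hM _ (hlarge j hj)).1 (hgrow j (hlarge j hj))

/-- Under (A1) and (CFL), a nonnegative global-in-time solution of the scheme (i.e. one
with `Σⱼ τⱼ = +∞`) is bounded. -/
theorem stmt13 (N : ℕ) (p τ : ℝ) (hp : 1 < p) (hτ : 0 < τ)
    (ω : (Fin N → ℤ) → ℝ)
    (hsym : ∀ α, ω (-α) = ω α) (hnonneg : ∀ α, 0 ≤ ω α) (hω0 : ω 0 = 0)
    (hsum : Summable ω) (hpos : 0 < ∑' α, ω α)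
    (hCFL : τ ≤ 1 / (4 * ∑' α, ω α))
    (u : ℕ → (Fin N → ℤ) → ℝ) (hu : ∀ j α, 0 ≤ u j α)
    (hbdd : ∀ j, BddAbove (Set.range (u j)))
    (Un : ℕ → ℝ) (hUn : ∀ j, Un j = ⨆ α, u j α)
    (τs : ℕ → ℝ) (hτs : ∀ j, τs j = τ * min 1 (Un j ^ (1 - p)))
    (hscheme : ∀ j α, u (j + 1) α = u j α + τs j * (discreteLh ω (u j) α + u j α ^ p))
    (hglobal : ¬ Summable τs) :
    ∃ B : ℝ, ∀ j, Un j ≤ B :=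
  stmt13_general N p τ hp hτ ω hnonneg hsum hCFL u hu hbdd Un hUn τs hτs hscheme hglobal
end
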